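/- Let Λ ∈ ℝ^{n×n} be Metzler and Hurwitz, let F̄ ∈ ℝ^{n×n} have nonnegative entries, and set R = −Λ⁻¹ F̄. If ρ(R) < 1, then Λ + F̄ is Hurwitz. -/

import Mathlib

/-!
Shifting a Metzler matrix by a multiple of the identity makes it entrywise nonnegative, and the
resolvent `(t - N)⁻¹` of a nonnegative matrix `N` is nonnegative for every real `t` above the real
spectrum of `N`: for large `t` it is a Neumann series, and nonnegativity propagates downwards
through the Neumann expansion around each point. This gives `-Λ⁻¹ ⪰ 0`, hence `R ⪰ 0`, and
`(1 - R)⁻¹ ⪰ 0`.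

If `(Λ + F̄) x = μ x` with `Re μ ≥ 0`, the triangle inequality applied to a nonnegative shift
gives `(Λ + F̄) |x| ≥ Re μ |x| ≥ 0`. By `1 - R = Λ⁻¹ (Λ + F̄)` and `-Λ⁻¹ ⪰ 0` this yields
`(1 - R) |x| ≤ 0`, and multiplying by `(1 - R)⁻¹ ⪰ 0` gives `|x| ≤ 0`, so `x = 0`.
-/

open Matrix

namespace Matrix

variable {ι α : Type*}

def Nonneg [Zero α] [LE α] (A : Matrix ι ι α) : Prop := ∀ i j, 0 ≤ A i j

def IsMetzler [Zero α] [LE α] (A : Matrix ι ι α) : Prop := ∀ i j, i ≠ j → 0 ≤ A i j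

theorem Nonneg.isMetzler [Zero α] [LE α] {A : Matrix ι ι α} (hA : A.Nonneg) : A.IsMetzler :=
  fun i j _ => hA i j

section OrderedSemiring

variable [Semiring α] [PartialOrder α] [IsOrderedRing α] {A B : Matrix ι ι α}

theorem IsMetzler.add (hA : A.IsMetzler) (hB : B.IsMetzler) : (A + B).IsMetzler :=
  fun i j hij => add_nonneg (hA i j hij) (hB i j hij)

theorem Nonneg.smul (hA : A.Nonneg) {c : α} (hc : 0 ≤ c) : (c • A).Nonneg :=
  fun i j => mul_nonneg hc (hA i j)

variable [Fintype ι]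

theorem Nonneg.mul (hA : A.Nonneg) (hB : B.Nonneg) : (A * B).Nonneg :=
  fun i j => Finset.sum_nonneg fun k _ => mul_nonneg (hA i k) (hB k j)

theorem Nonneg.pow [DecidableEq ι] (hA : A.Nonneg) : ∀ k : ℕ, (A ^ k).Nonneg
  | 0 => fun i j => by rw [pow_zero, one_apply]; split_ifs <;> simp
  | k + 1 => pow_succ A k ▸ (hA.pow k).mul hA

theorem Nonneg.mulVec_mono (hA : A.Nonneg) : Monotone (A *ᵥ ·) := fun _ _ huv i =>
  Finset.sum_le_sum fun k _ => mul_le_mul_of_nonneg_left (huv k) (hA i k)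

end OrderedSemiring

section Resolvent

attribute [local instance] Matrix.linftyOpNormedRing Matrix.linftyOpNormedAlgebra

theorem isClosed_setOf_nonneg : IsClosed {A : Matrix ι ι ℝ | A.Nonneg} := by
  simp only [Nonneg, Set.ofPred_forall]
  exact isClosed_iInter fun i => isClosed_iInter fun j =>
    isClosed_le continuous_const (continuous_id.matrix_elem i j)

variable [Fintype ι] [DecidableEq ι] {N : Matrix ι ι ℝ}

theorem Nonneg.inverse_one_sub (hN : N.Nonneg) (h : ‖N‖ < 1) :
    (Ring.inverse (1 - N)).Nonneg := by
  rw [NormedRing.inverse_one_sub _ h]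
  exact isClosed_setOf_nonneg.mem_of_tendsto
    (summable_geometric_of_norm_lt_one h).hasSum.tendsto_sum_nat
    (.of_forall fun n i j => by
      rw [sum_apply]
      exact Finset.sum_nonneg fun k _ => hN.pow k i j)

theorem Nonneg.resolvent_of_norm_lt (hN : N.Nonneg) {t : ℝ} (ht : ‖N‖ < t) :
    (resolvent N t).Nonneg := by
  have ht0 : 0 < t := (norm_nonneg N).trans_lt ht
  have h := spectrum.units_smul_resolvent_self (r := Units.mk0 t ht0.ne') (a := N)
  simp only [Units.smul_def, Units.val_inv_eq_inv_val, Units.val_mk0, resolvent, map_one] at h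
  have hX : ‖t⁻¹ • N‖ < 1 := by
    rwa [norm_smul, norm_inv, Real.norm_of_nonneg ht0.le, inv_mul_lt_one₀ ht0]
  rw [← inv_smul_smul₀ ht0.ne' (resolvent N t), resolvent, h]
  exact ((hN.smul (inv_nonneg.2 ht0.le)).inverse_one_sub hX).smul (inv_nonneg.2 ht0.le)

/-- Near `s` the resolvent is the Neumann series `R(t) = ∑ₖ (s - t)ᵏ R(s)ᵏ⁺¹`, whose terms are
nonnegative for `t ≤ s`. -/
theorem nonneg_resolvent_of_le {s t : ℝ} (hs : s ∈ resolventSet ℝ N)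
    (hRs : (resolvent N s).Nonneg) (hts : t ≤ s) (hsmall : (s - t) * ‖resolvent N s‖ < 1) :
    (resolvent N t).Nonneg := by
  set X := (s - t) • resolvent N s
  have hX : ‖X‖ < 1 := by rwa [norm_smul, Real.norm_of_nonneg (sub_nonneg.2 hts)]
  have hfactor : algebraMap ℝ _ t - N = (algebraMap ℝ _ s - N) * (1 - X) := by
    rw [mul_sub, mul_one, mul_smul_comm, resolvent, Ring.mul_inverse_cancel _ hs,
      Algebra.algebraMap_eq_smul_one, Algebra.algebraMap_eq_smul_one, sub_smul]
    abel
  have hresolvent : resolvent N t = Ring.inverse (1 - X) * resolvent N s := by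
    rw [resolvent, hfactor, Ring.inverse_mul (Or.inl hs)]
    rfl
  rw [hresolvent]
  exact ((hRs.smul (sub_nonneg.2 hts)).inverse_one_sub hX).mul hRs

/-- The set of `t ≥ a` with `R(t) ⪰ 0` is closed, contains every `t > ‖N‖`, and extends
downwards from each of its points, so by continuous induction it reaches `a`. -/
theorem Nonneg.resolvent_nonneg (hN : N.Nonneg) {a : ℝ} (ha : ∀ t ∈ spectrum ℝ N, t < a) :
    (resolvent N a).Nonneg := by
  have hres : ∀ t, a ≤ t → t ∈ resolventSet ℝ N := fun t ht =>
    spectrum.notMem_iff.mp fun h => (ha t h).not_ge ht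
  set b := max a (‖N‖ + 1)
  refine IsClosed.mem_of_ge_of_forall_exists_lt (s := {t | (resolvent N t).Nonneg})
    (b := b) ?_ ?_ (le_max_left _ _) ?_
  · have hcont : ContinuousOn (resolvent N) (Set.Icc a b) := fun t ht =>
      (spectrum.hasDerivAt_resolvent_const_left (hres t ht.1)).continuousAt.continuousWithinAt
    rw [Set.inter_comm]
    exact hcont.preimage_isClosed_of_isClosed isClosed_Icc isClosed_setOf_nonneg
  · exact hN.resolvent_of_norm_lt (by linarith [le_max_right a (‖N‖ + 1)])
  · rintro s ⟨hRs, has, -⟩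
    set δ := (‖resolvent N s‖ + 1)⁻¹
    have hδ : 0 < δ := by positivity
    refine ⟨max a (s - δ), nonneg_resolvent_of_le (hres s has.le) hRs
      (max_le has.le (by linarith)) ?_, le_max_left _ _, max_lt has (by linarith)⟩
    calc (s - max a (s - δ)) * ‖resolvent N s‖ ≤ δ * ‖resolvent N s‖ := by
          gcongr; linarith [le_max_right a (s - δ)]
      _ < 1 := by rw [inv_mul_lt_one₀ (by positivity)]; linarith

theorem Nonneg.le_of_algebraMap_sub_mulVec_le (hN : N.Nonneg) {a : ℝ}
    (ha : ∀ t ∈ spectrum ℝ N, t < a) {u v : ι → ℝ}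
    (h : (algebraMap ℝ _ a - N) *ᵥ u ≤ (algebraMap ℝ _ a - N) *ᵥ v) : u ≤ v := by
  have hunit : IsUnit (algebraMap ℝ _ a - N) := spectrum.notMem_iff.mp fun h => (ha a h).false
  simpa only [mulVec_mulVec, resolvent, Ring.inverse_mul_cancel _ hunit, one_mulVec] using
    (hN.resolvent_nonneg ha).mulVec_mono h

end Resolvent

section Metzler

variable [Fintype ι] {A : Matrix ι ι ℝ}

theorem Nonneg.norm_mulVec_le {N : Matrix ι ι ℝ} (hN : N.Nonneg) (x : ι → ℂ) (i : ι) :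
    ‖(N.map Complex.ofReal *ᵥ x) i‖ ≤ (N *ᵥ fun j => ‖x j‖) i := by
  refine (norm_sum_le _ _).trans_eq (Finset.sum_congr rfl fun j _ => ?_)
  simp only [map_apply, norm_mul, Complex.norm_real, Real.norm_of_nonneg (hN i j)]

variable [DecidableEq ι]

theorem IsMetzler.exists_nonneg_algebraMap_add (hA : A.IsMetzler) :
    ∃ s : ℝ, (algebraMap ℝ (Matrix ι ι ℝ) s + A).Nonneg := by
  refine ⟨∑ i, |A i i|, fun i j => ?_⟩
  rw [add_apply, algebraMap_matrix_apply]
  split_ifs with hij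
  · subst hij
    have := Finset.single_le_sum (fun k _ => abs_nonneg (A k k)) (Finset.mem_univ i)
    simp only [Algebra.algebraMap_self, RingHom.id_apply]
    linarith [neg_abs_le (A i i)]
  · simpa using hA i j hij

theorem IsMetzler.resolvent_nonneg (hA : A.IsMetzler) {a : ℝ}
    (ha : ∀ t ∈ spectrum ℝ A, t < a) : (resolvent A a).Nonneg := by
  obtain ⟨s, hN⟩ := hA.exists_nonneg_algebraMap_add
  have hshift : resolvent (algebraMap ℝ _ s + A) (a + s) = resolvent A a := by
    simp only [resolvent, map_add]
    abel_nf
  rw [← hshift]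
  refine hN.resolvent_nonneg fun t ht => ?_
  have := ha (t - s) (spectrum.add_mem_add_iff.mp (by rwa [sub_add_cancel]))
  linarith

theorem IsMetzler.nonneg_neg_inv (hA : A.IsMetzler) (hA' : ∀ t ∈ spectrum ℝ A, t < 0) :
    (-A⁻¹).Nonneg := by
  have hdet := (isUnit_iff_isUnit_det A).mp
    ((spectrum.zero_notMem_iff ℝ).mp fun h => (hA' 0 h).false)
  have hinv : Ring.inverse (-A) = -A⁻¹ := by
    rw [← nonsing_inv_eq_ringInverse]
    exact inv_eq_left_inv (by rw [neg_mul_neg, nonsing_inv_mul _ hdet])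
  simpa [resolvent, hinv] using hA.resolvent_nonneg hA'

theorem IsMetzler.re_smul_le_mulVec_norm (hA : A.IsMetzler) {x : ι → ℂ} {μ : ℂ}
    (hx : A.map Complex.ofReal *ᵥ x = μ • x) :
    μ.re • (fun i => ‖x i‖) ≤ A *ᵥ fun i => ‖x i‖ := by
  obtain ⟨s, hN⟩ := hA.exists_nonneg_algebraMap_add
  have hshift : (algebraMap ℝ _ s + A).map Complex.ofReal *ᵥ x = ((s : ℂ) + μ) • x := by
    rw [Matrix.map_add _ Complex.ofReal_add, add_mulVec, hx, add_smul]
    simp [algebraMap_eq_diagonal]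
  have hre : s + μ.re ≤ ‖(s : ℂ) + μ‖ := by simpa using Complex.re_le_norm ((s : ℂ) + μ)
  intro i
  have h := hN.norm_mulVec_le x i
  rw [hshift, Pi.smul_apply, norm_smul] at h
  simp only [add_mulVec, Pi.add_apply, algebraMap_eq_diagonal, mulVec_diagonal,
    Pi.algebraMap_apply, Algebra.algebraMap_self, RingHom.id_apply, Pi.smul_apply, smul_eq_mul] at h ⊢
  nlinarith [norm_nonneg (x i)]

end Metzler

variable [Fintype ι] [DecidableEq ι]

theorem ofReal_mem_spectrum_map {A : Matrix ι ι ℝ} {t : ℝ} (ht : t ∈ spectrum ℝ A) :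
    (t : ℂ) ∈ spectrum ℂ (A.map Complex.ofReal) := by
  rw [mem_spectrum_iff_isRoot_charpoly] at ht ⊢
  rw [show A.map Complex.ofReal = A.map Complex.ofRealHom from rfl, charpoly_map]
  exact ht.map

theorem exists_mulVec_eq_smul_of_mem_spectrum {K : Type*} [Field K] {A : Matrix ι ι K} {μ : K}
    (h : μ ∈ spectrum K A) : ∃ x ≠ 0, A *ᵥ x = μ • x := by
  rw [← spectrum_toLin', ← Module.End.hasEigenvalue_iff_mem_spectrum] at h
  obtain ⟨x, hx⟩ := h.exists_hasEigenvector
  exact ⟨x, hx.2, hx.apply_eq_smul⟩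

end Matrix

/-- If `Λ` is Metzler and Hurwitz, `F̄ ⪰ 0`, and `ρ(−Λ⁻¹ F̄) < 1`, then `Λ + F̄` is Hurwitz. -/
theorem sum_hurwitz_of_spectral_radius_lt_one {n : ℕ} (Λ F : Matrix (Fin n) (Fin n) ℝ)
    (hMetz : ∀ i j, i ≠ j → 0 ≤ Λ i j)
    (hHur : ∀ μ ∈ spectrum ℂ (Λ.map Complex.ofReal), μ.re < 0)
    (hF : ∀ i j, 0 ≤ F i j)
    (hρ : ∀ μ ∈ spectrum ℂ ((-Λ⁻¹ * F).map Complex.ofReal), ‖μ‖ < 1) :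
    ∀ μ ∈ spectrum ℂ ((Λ + F).map Complex.ofReal), μ.re < 0 := by
  intro μ hμ
  by_contra! hre
  have hΛ : ∀ t ∈ spectrum ℝ Λ, t < 0 := fun t ht => by
    simpa using hHur _ (ofReal_mem_spectrum_map ht)
  have hΛdet := (isUnit_iff_isUnit_det Λ).mp
    ((spectrum.zero_notMem_iff ℝ).mp fun h => (hΛ 0 h).false)
  have hΛinv : (-Λ⁻¹).Nonneg := IsMetzler.nonneg_neg_inv hMetz hΛ
  set R := -Λ⁻¹ * F
  have hR : ∀ t ∈ spectrum ℝ R, t < 1 := fun t ht => by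
    have := hρ _ (ofReal_mem_spectrum_map ht)
    rw [Complex.norm_real, Real.norm_eq_abs] at this
    linarith [le_abs_self t]
  have hfactor : 1 - R = Λ⁻¹ * (Λ + F) := by
    simp [R, mul_add, nonsing_inv_mul _ hΛdet]
  obtain ⟨x, hx0, hx⟩ := exists_mulVec_eq_smul_of_mem_spectrum hμ
  set y := fun i => ‖x i‖
  have hy : 0 ≤ (Λ + F) *ᵥ y := (smul_nonneg hre fun i => norm_nonneg (x i)).trans
    ((IsMetzler.add hMetz (Nonneg.isMetzler hF)).re_smul_le_mulVec_norm hx)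
  have hRy : (1 - R) *ᵥ y ≤ 0 := by
    simpa [hfactor, ← mulVec_mulVec, neg_mulVec] using hΛinv.mulVec_mono hy
  have hy0 : y ≤ 0 :=
    (hΛinv.mul hF).le_of_algebraMap_sub_mulVec_le hR (by rwa [map_one, mulVec_zero])
  exact hx0 (funext fun i => norm_le_zero_iff.mp (hy0 i))
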